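/- arXiv:1606.09198 — 2 statements merged into one kernel-verified Lean document; each statement's English description precedes it below -/
import Mathlib

section
/- Define u, v : ℝⁿ × ℝⁿ → ℝ by u(x,y) = (x·y)/(1 + x·x) and v(x,y) = √((1+x·x)(1+y·y) - (x·y)²)/(1+x·x), and set z = u + iv. Then on the open set where (1+x·x)(1+y·y) - (x·y)² > 0, the function z satisfies the system of PDEs ∂z/∂x^l + z ∂z/∂y^l = 0 for all 1 ≤ l ≤ n. -/
/-!
With `A = 1 + x·x`, `B = 1 + y·y`, `C = x·y`, the function `z = (C + i√(AB - C²))/A` is a root of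
`F(w) = A w² - 2 C w + B`. Differentiating `F(z) = 0` in the directions `∂/∂xˡ` and `∂/∂yˡ`
and combining the two identities gives
`2 (A z - C) (∂z/∂xˡ + z ∂z/∂yˡ) = -(∂F/∂xˡ + z ∂F/∂yˡ)(z)`,
and the right side vanishes identically because `∂A/∂yˡ = ∂B/∂xˡ = 0`, `∂A/∂xˡ = 2 ∂C/∂yˡ`,
`∂B/∂yˡ = 2 ∂C/∂xˡ`. The root is simple: `A z - C = i√(AB - C²) ≠ 0`.
-/

open Filter Topology

section QuadraticRoot

variable {E : Type*} [NormedAddCommGroup E] [NormedSpace ℝ E] {a b c z : E → ℂ}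
  {a' b' c' z' : E →L[ℝ] ℂ} {p : E}

theorem HasFDerivAt.quadratic_root (ha : HasFDerivAt a a' p) (hb : HasFDerivAt b b' p)
    (hc : HasFDerivAt c c' p) (hz : HasFDerivAt z z' p)
    (hroot : ∀ᶠ q in 𝓝 p, a q * z q ^ 2 - 2 * b q * z q + c q = 0) (h : E) :
    2 * (a p * z p - b p) * z' h + (a' h * z p ^ 2 - 2 * b' h * z p + c' h) = 0 := by
  have hF := ((ha.mul (hz.pow 2)).sub ((hb.const_mul 2).mul hz)).add hc
  have hF0 : HasFDerivAt (fun q => a q * z q ^ 2 - 2 * b q * z q + c q) (0 : E →L[ℝ] ℂ) p :=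
    (hasFDerivAt_const 0 p).congr_of_eventuallyEq hroot
  have hFh := congrArg (· h) (hF.unique hF0)
  simp only [Nat.add_one_sub_one, pow_one, nsmul_eq_mul, Nat.cast_ofNat, add_apply, sub_apply,
    smul_apply, smul_eq_mul, zero_apply] at hFh
  linear_combination hFh

theorem HasFDerivAt.burgers_of_quadratic_root (ha : HasFDerivAt a a' p)
    (hb : HasFDerivAt b b' p) (hc : HasFDerivAt c c' p) (hz : HasFDerivAt z z' p)
    (hroot : ∀ᶠ q in 𝓝 p, a q * z q ^ 2 - 2 * b q * z q + c q = 0)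
    (hsimple : a p * z p ≠ b p) {h k : E} (hak : a' k = 0) (hch : c' h = 0)
    (hah : a' h = 2 * b' k) (hck : c' k = 2 * b' h) :
    z' h + z p * z' k = 0 := by
  have eh := ha.quadratic_root hb hc hz hroot h
  have ek := ha.quadratic_root hb hc hz hroot k
  rw [hah, hch] at eh
  rw [hak, hck] at ek
  have hprod : (a p * z p - b p) * (z' h + z p * z' k) = 0 := by
    linear_combination (eh + z p * ek) / 2
  exact (mul_eq_zero.mp hprod).resolve_left (sub_ne_zero.mpr hsimple)

end QuadraticRoot

section DotProduct

variable {E ι : Type*} [NormedAddCommGroup E] [NormedSpace ℝ E] [Fintype ι]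
  {f g : E → ι → ℝ} {f' g' : E →L[ℝ] ι → ℝ} {p : E}

theorem HasFDerivAt.dotProduct (hf : HasFDerivAt f f' p) (hg : HasFDerivAt g g' p) :
    HasFDerivAt (fun q => f q ⬝ᵥ g q)
      (∑ i, (f p i • (ContinuousLinearMap.proj i).comp g'
        + g p i • (ContinuousLinearMap.proj i).comp f')) p :=
  HasFDerivAt.fun_sum fun i _ =>
    ((hasFDerivAt_apply i (f p)).comp p hf).mul ((hasFDerivAt_apply i (g p)).comp p hg :)

theorem dotProduct_fderiv_apply (h : E) :
    (∑ i, (f p i • (ContinuousLinearMap.proj i).comp g'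
        + g p i • (ContinuousLinearMap.proj i).comp f')) h = f p ⬝ᵥ g' h + f' h ⬝ᵥ g p := by
  simp only [Finset.sum_add_distrib, add_apply, sum_apply, smul_apply,
    ContinuousLinearMap.comp_apply, ContinuousLinearMap.proj_apply, smul_eq_mul, dotProduct,
    mul_comm]

end DotProduct

noncomputable def burgersProfile (A B C : ℝ) : ℂ :=
  ((C / A : ℝ) : ℂ) + ((Real.sqrt (A * B - C ^ 2) / A : ℝ) : ℂ) * Complex.I

theorem mul_burgersProfile_sub {A B C : ℝ} (hA : A ≠ 0) :
    A * burgersProfile A B C - C = Real.sqrt (A * B - C ^ 2) * Complex.I := by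
  have hA' : (A : ℂ) ≠ 0 := by exact_mod_cast hA
  simp only [burgersProfile]
  push_cast
  field_simp
  ring

theorem burgersProfile_isRoot {A B C : ℝ} (hA : A ≠ 0) (hD : 0 ≤ A * B - C ^ 2) :
    A * burgersProfile A B C ^ 2 - 2 * C * burgersProfile A B C + B = 0 := by
  have hs : (Real.sqrt (A * B - C ^ 2) : ℂ) ^ 2 = A * B - C ^ 2 := by
    exact_mod_cast Real.sq_sqrt hD
  have hA' : (A : ℂ) ≠ 0 := by exact_mod_cast hA
  apply mul_left_cancel₀ hA'
  linear_combination
    (A * burgersProfile A B C - C + Real.sqrt (A * B - C ^ 2) * Complex.I)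
      * mul_burgersProfile_sub (B := B) (C := C) hA
    - hs + (Real.sqrt (A * B - C ^ 2) : ℂ) ^ 2 * Complex.I_sq

theorem mul_burgersProfile_ne {A B C : ℝ} (hA : A ≠ 0) (hD : 0 < A * B - C ^ 2) :
    A * burgersProfile A B C ≠ C := by
  rw [← sub_ne_zero, mul_burgersProfile_sub hA]
  exact mul_ne_zero (Complex.ofReal_ne_zero.mpr (Real.sqrt_pos.mpr hD).ne') Complex.I_ne_zero

theorem ContinuousAt.eventually_burgersProfile_isRoot {X : Type*} [TopologicalSpace X]
    {A B C : X → ℝ} {p : X} (hA : ContinuousAt A p)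
    (hB : ContinuousAt B p) (hC : ContinuousAt C p) (hA0 : A p ≠ 0)
    (hD : 0 < A p * B p - C p ^ 2) :
    ∀ᶠ q in 𝓝 p, (A q : ℂ) * burgersProfile (A q) (B q) (C q) ^ 2
      - 2 * (C q : ℂ) * burgersProfile (A q) (B q) (C q) + (B q : ℂ) = 0 := by
  filter_upwards [hA.eventually_ne hA0, ((hA.mul hB).sub (hC.pow 2)).eventually (lt_mem_nhds hD)]
    with q hAq hDq
  exact burgersProfile_isRoot hAq hDq.le

theorem DifferentiableAt.burgersProfile {E : Type*} [NormedAddCommGroup E] [NormedSpace ℝ E]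
    {A B C : E → ℝ} {p : E} (hA : DifferentiableAt ℝ A p)
    (hB : DifferentiableAt ℝ B p) (hC : DifferentiableAt ℝ C p) (hA0 : A p ≠ 0)
    (hD : 0 < A p * B p - C p ^ 2) :
    DifferentiableAt ℝ (fun q => _root_.burgersProfile (A q) (B q) (C q)) p := by
  simp only [_root_.burgersProfile, ← Complex.ofRealCLM_apply]
  fun_prop (disch := first | exact hA0 | exact hD.ne')

theorem one_add_dotProduct_self_pos {ι : Type*} [Fintype ι] (x : ι → ℝ) : 0 < 1 + x ⬝ᵥ x :=
  add_pos_of_pos_of_nonneg one_pos (Finset.sum_nonneg fun i _ => mul_self_nonneg (x i))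

/-- With `u(x,y) = (x·y)/(1+x·x)`, `v(x,y) = √((1+x·x)(1+y·y)-(x·y)²)/(1+x·x)` and
`z = u + iv`, the function `z` satisfies `∂z/∂xˡ + z ∂z/∂yˡ = 0` for all `l` on the open
set where `(1+x·x)(1+y·y)-(x·y)² > 0`. -/
theorem explicit_solution_complex_burgers (n : ℕ)
    (z : (Fin n → ℝ) × (Fin n → ℝ) → ℂ)
    (hz : z = fun p =>
      (((∑ i, p.1 i * p.2 i) / (1 + ∑ i, p.1 i ^ 2) : ℝ) : ℂ)
        + ((Real.sqrt ((1 + ∑ i, p.1 i ^ 2) * (1 + ∑ i, p.2 i ^ 2)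
              - (∑ i, p.1 i * p.2 i) ^ 2) / (1 + ∑ i, p.1 i ^ 2) : ℝ) : ℂ) * Complex.I)
    (p : (Fin n → ℝ) × (Fin n → ℝ))
    (hp : 0 < (1 + ∑ i, p.1 i ^ 2) * (1 + ∑ i, p.2 i ^ 2) - (∑ i, p.1 i * p.2 i) ^ 2)
    (l : Fin n) :
    fderiv ℝ z p (Pi.single l 1, 0) + z p * fderiv ℝ z p (0, Pi.single l 1) = 0 := by
  set A : (Fin n → ℝ) × (Fin n → ℝ) → ℝ := fun q => 1 + q.1 ⬝ᵥ q.1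
  set B : (Fin n → ℝ) × (Fin n → ℝ) → ℝ := fun q => 1 + q.2 ⬝ᵥ q.2
  set C : (Fin n → ℝ) × (Fin n → ℝ) → ℝ := fun q => q.1 ⬝ᵥ q.2
  obtain rfl : z = fun q => burgersProfile (A q) (B q) (C q) := by
    simp [hz, A, B, C, burgersProfile, dotProduct, sq]
  have hA0 : A p ≠ 0 := (one_add_dotProduct_self_pos p.1).ne'
  have hD : 0 < A p * B p - C p ^ 2 := by simpa [A, B, C, dotProduct, sq] using hp
  have hfst := (ContinuousLinearMap.fst ℝ (Fin n → ℝ) (Fin n → ℝ)).hasFDerivAt (x := p)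
  have hsnd := (ContinuousLinearMap.snd ℝ (Fin n → ℝ) (Fin n → ℝ)).hasFDerivAt (x := p)
  have hA := (hfst.dotProduct hfst).const_add 1
  have hB := (hsnd.dotProduct hsnd).const_add 1
  have hC := hfst.dotProduct hsnd
  have hdiff := hA.differentiableAt.burgersProfile hB.differentiableAt hC.differentiableAt hA0 hD
  have hroot := hA.continuousAt.eventually_burgersProfile_isRoot hB.continuousAt hC.continuousAt
    hA0 hD
  refine (Complex.ofRealCLM.hasFDerivAt.comp p hA).burgers_of_quadratic_root
    (Complex.ofRealCLM.hasFDerivAt.comp p hC) (Complex.ofRealCLM.hasFDerivAt.comp p hB)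
    hdiff.hasFDerivAt hroot (mul_burgersProfile_ne hA0 hD) ?_ ?_ ?_ ?_ <;>
  simp only [ContinuousLinearMap.comp_apply, dotProduct_fderiv_apply,
    ContinuousLinearMap.coe_fst', ContinuousLinearMap.coe_snd', single_dotProduct,
    dotProduct_single, dotProduct_zero, zero_dotProduct, Complex.ofRealCLM_apply] <;>
  push_cast <;> ring
end

section
/- Define Φ : TSⁿ × H₊ → ℂⁿ⁺¹ by Φ((u,v), z) = v - z·u, where TSⁿ = {(u,v) ∈ ℝⁿ⁺¹ × ℝⁿ⁺¹ : u·u = 1, u·v = 0}, H₊ = {z ∈ ℂ : Im z > 0}, and real vectors are regarded as complex vectors. Then Φ is injective and its image is exactly ℂⁿ⁺¹ ∖ ℝⁿ⁺¹. -/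
open scoped BigOperators

/-- The map `Φ((u,v),z) = v - z·u`, defined on
`TSⁿ × H₊ = {(u,v) : u·u = 1, u·v = 0} × {Im z > 0}`, is injective with image exactly
`ℂⁿ⁺¹ ∖ ℝⁿ⁺¹`. -/
theorem Phi_injOn_and_image (n : ℕ) :
    Set.InjOn
      (fun t : ((Fin (n + 1) → ℝ) × (Fin (n + 1) → ℝ)) × ℂ =>
        (fun i => (t.1.2 i : ℂ) - t.2 * (t.1.1 i : ℂ) : Fin (n + 1) → ℂ))
      {t | (∑ i, t.1.1 i * t.1.1 i) = 1 ∧ (∑ i, t.1.1 i * t.1.2 i) = 0 ∧ 0 < t.2.im} ∧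
    (fun t : ((Fin (n + 1) → ℝ) × (Fin (n + 1) → ℝ)) × ℂ =>
        (fun i => (t.1.2 i : ℂ) - t.2 * (t.1.1 i : ℂ) : Fin (n + 1) → ℂ)) ''
      {t | (∑ i, t.1.1 i * t.1.1 i) = 1 ∧ (∑ i, t.1.1 i * t.1.2 i) = 0 ∧ 0 < t.2.im}
      = {w : Fin (n + 1) → ℂ | ¬ ∀ i, (w i).im = 0} := by
  constructor
  · rintro ⟨⟨u, v⟩, z⟩ ⟨hu, huv, hz⟩ ⟨⟨u', v'⟩, z'⟩ ⟨hu', huv', hz'⟩ heq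
    simp only [Set.mem_setOf_eq] at hu huv hz hu' huv' hz'
    simp only at heq
    -- imaginary parts
    have him : ∀ i, z.im * u i = z'.im * u' i := by
      intro i
      have h := congrArg Complex.im (congrFun heq i)
      simp [Complex.mul_im] at h
      linarith
    -- imaginary parts of z agree
    have hsum : ∑ i, (z.im * u i) * (z.im * u i)
        = ∑ i, (z'.im * u' i) * (z'.im * u' i) :=
      Finset.sum_congr rfl fun i _ => by rw [him i]
    have hL : ∑ i, (z.im * u i) * (z.im * u i) = z.im * z.im := by
      simp_rw [mul_mul_mul_comm, ← Finset.mul_sum, hu, mul_one]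
    have hL' : ∑ i, (z'.im * u' i) * (z'.im * u' i) = z'.im * z'.im := by
      simp_rw [mul_mul_mul_comm, ← Finset.mul_sum, hu', mul_one]
    have hzim : z.im = z'.im := by
      rw [hL, hL'] at hsum; nlinarith
    have hune : ∀ i, u i = u' i := by
      intro i
      have := him i
      rw [← hzim] at this
      exact mul_left_cancel₀ (ne_of_gt hz) this
    -- real parts
    have hre : ∀ i, v i - z.re * u i = v' i - z'.re * u' i := by
      intro i
      have h := congrArg Complex.re (congrFun heq i)
      simp [Complex.mul_re] at h
      linarith
    have hzre : z.re = z'.re := by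
      have hs : ∑ i, u i * (v i - z.re * u i) = ∑ i, u i * (v' i - z'.re * u' i) :=
        Finset.sum_congr rfl fun i _ => by rw [hre i, hune i]
      have e1 : ∑ i, u i * (v i - z.re * u i) = - z.re := by
        simp_rw [mul_sub, Finset.sum_sub_distrib, huv, mul_left_comm, ← Finset.mul_sum, hu,
          mul_one, zero_sub]
      have e2 : ∑ i, u i * (v' i - z'.re * u' i) = - z'.re := by
        have : ∀ i, u i * (v' i - z'.re * u' i) = u' i * (v' i - z'.re * u' i) := by
          intro i; rw [hune i]
        simp_rw [this, mul_sub, Finset.sum_sub_distrib, huv', mul_left_comm, ← Finset.mul_sum,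
          hu', mul_one, zero_sub]
      rw [e1, e2] at hs; linarith
    have hzeq : z = z' := Complex.ext hzre hzim
    have hveq : ∀ i, v i = v' i := by
      intro i
      have := hre i
      rw [hune i, hzre] at this
      linarith
    simp [Prod.ext_iff]
    exact ⟨⟨funext hune, funext hveq⟩, hzeq⟩
  · ext w
    simp only [Set.mem_image, Set.mem_setOf_eq]
    constructor
    · rintro ⟨⟨⟨u, v⟩, z⟩, ⟨hu, huv, hz⟩, heq⟩ hall
      simp only at heq
      replace hu : ∑ i, u i * u i = 1 := hu
      replace hz : 0 < z.im := hz
      have hu0 : ∀ i, u i = 0 := by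
        intro i
        have h := congrArg Complex.im (congrFun heq i)
        simp [Complex.mul_im] at h
        have := hall i
        have : z.im * u i = 0 := by linarith
        exact (mul_eq_zero.mp this).resolve_left (ne_of_gt hz)
      rw [Finset.sum_congr rfl (fun i _ => by rw [hu0 i, mul_zero])] at hu
      simp at hu
    · intro hw
      push_neg at hw
      obtain ⟨j, hj⟩ := hw
      have hSpos : 0 < ∑ i, (w i).im * (w i).im := by
        have h1 : (w j).im * (w j).im ≤ ∑ i, (w i).im * (w i).im :=
          Finset.single_le_sum (f := fun i => (w i).im * (w i).im)
            (fun i _ => mul_self_nonneg _) (Finset.mem_univ j)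
        have h2 : 0 < (w j).im * (w j).im := mul_self_pos.mpr hj
        linarith
      set y : ℝ := Real.sqrt (∑ i, (w i).im * (w i).im) with hy
      have hypos : 0 < y := Real.sqrt_pos.mpr hSpos
      have hy2 : y * y = ∑ i, (w i).im * (w i).im := Real.mul_self_sqrt hSpos.le
      set u : Fin (n + 1) → ℝ := fun i => -(w i).im / y with hudef
      have hu1 : ∑ i, u i * u i = 1 := by
        have h3 : ∀ i, u i * u i = (w i).im * (w i).im / (y * y) := by
          intro i
          rw [hudef]
          simp only
          rw [div_mul_div_comm, neg_mul_neg]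
        rw [Finset.sum_congr rfl (fun i _ => h3 i), ← Finset.sum_div, ← hy2,
          div_self (by positivity)]
      set x : ℝ := -∑ i, u i * (w i).re with hx
      set v : Fin (n + 1) → ℝ := fun i => (w i).re + x * u i with hvdef
      refine ⟨⟨⟨u, v⟩, ⟨x, y⟩⟩, ⟨hu1, ?_, hypos⟩, ?_⟩
      · simp only [hvdef, mul_add, Finset.sum_add_distrib]
        have : ∀ i, u i * (x * u i) = x * (u i * u i) := fun i => by ring
        rw [Finset.sum_congr rfl (fun i _ => this i), ← Finset.mul_sum, hu1, mul_one, hx]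
        ring
      · funext i
        simp only
        apply Complex.ext
        · simp [Complex.mul_re, hvdef]
        · simp [Complex.mul_im, hudef]
          field_simp
end
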